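/- arXiv:1406.5793 — 4 statements merged into one kernel-verified Lean document; each statement's English description precedes it below -/
import Mathlib

section
/- In any graph with all vertex degrees at most d, the number of subtrees of size u containing a specified vertex v (i.e., connected induced-subtree vertex sets of size u rooted at v, counted as subtrees of the graph containing v) is at most (e·d)^{u-1}. -/
/-!
Grow a connected set `S ∋ v` one vertex at a time, always adding the frontier vertex of least
key, where a vertex whose first neighbour among those chosen so far is the `p`-th chosen vertex,
and which is the `i`-th neighbour of that vertex in a fixed order, has key `p * d + i`.
The keys of the `m = |S| - 1` added vertices strictly increase and stay below `d * m`, and the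
key sequence replays the exploration, hence determines `S`. So `S` is encoded injectively by an
`m`-subset of `{0, …, d * m - 1}`, and `C(d m, m) ≤ (d m)^m / m! ≤ (e d)^m`.
-/

open Finset

theorem choose_mul_le_exp_mul_pow (d m : ℕ) :
    ((d * m).choose m : ℝ) ≤ (Real.exp 1 * d) ^ m := by
  calc ((d * m).choose m : ℝ) ≤ ((d * m : ℕ) : ℝ) ^ m / m.factorial :=
        Nat.choose_le_pow_div m _
    _ = (d : ℝ) ^ m * ((m : ℝ) ^ m / m.factorial) := by push_cast; ring
    _ ≤ (d : ℝ) ^ m * Real.exp m := by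
        gcongr; exact Real.pow_div_factorial_le_exp _ (Nat.cast_nonneg m) m
    _ = (Real.exp 1 * d) ^ m := by rw [mul_pow, ← Real.exp_nat_mul, mul_one, mul_comm]

lemma StrictMonoOn.eqOn_of_image_range_eq {α : Type*} [LinearOrder α] {f g : ℕ → α} {m : ℕ}
    (hf : StrictMonoOn f (Set.Iio m)) (hg : StrictMonoOn g (Set.Iio m))
    (h : (range m).image f = (range m).image g) : Set.EqOn f g (Set.Iio m) := by
  have hF : StrictMono fun i : Fin m => f i := fun i j hij => hf i.2 j.2 hij
  have hG : StrictMono fun i : Fin m => g i := fun i j hij => hg i.2 j.2 hij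
  have hfg := hF.range_inj hG |>.1 <| by
    ext k
    simpa [Fin.exists_iff] using congrArg (k ∈ ·) h
  exact fun n hn => congrFun hfg ⟨n, hn⟩

namespace SimpleGraph

section Parent

variable {V : Type*} (G : SimpleGraph V) [DecidableRel G.Adj]

def parentIdx (l : List V) (x : V) : ℕ := l.findIdx (G.Adj · x)

def parent (l : List V) (x : V) : V := l.getD (G.parentIdx l x) x

variable {G} {l : List V} {x : V}

lemma parentIdx_lt_length (h : ∃ y ∈ l, G.Adj y x) : G.parentIdx l x < l.length :=
  List.findIdx_lt_length_of_exists (by simpa using h)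

lemma parentIdx_eq_length (h : ¬ ∃ y ∈ l, G.Adj y x) : G.parentIdx l x = l.length :=
  List.findIdx_eq_length.2 (by simpa using h)

lemma getElem?_parentIdx (h : ∃ y ∈ l, G.Adj y x) :
    l[G.parentIdx l x]? = some (G.parent l x) := by
  rw [parent, List.getD_eq_getElem _ _ (parentIdx_lt_length h), List.getElem?_eq_getElem]

lemma adj_parent (h : ∃ y ∈ l, G.Adj y x) : G.Adj (G.parent l x) x := by
  rw [parent, List.getD_eq_getElem _ _ (parentIdx_lt_length h)]
  exact of_decide_eq_true (List.findIdx_getElem (w := parentIdx_lt_length h))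

lemma parentIdx_append (l' : List V) (h : ∃ y ∈ l, G.Adj y x) :
    G.parentIdx (l ++ l') x = G.parentIdx l x := by
  rw [parentIdx, List.findIdx_append]
  exact if_pos (parentIdx_lt_length h)

lemma parent_append (l' : List V) (h : ∃ y ∈ l, G.Adj y x) :
    G.parent (l ++ l') x = G.parent l x := by
  rw [parent, parent, parentIdx_append l' h, List.getD_append _ _ _ _ (parentIdx_lt_length h)]

lemma parentIdx_append_singleton {w : V} (h : ¬ ∃ y ∈ l, G.Adj y x) (hw : G.Adj w x) :
    G.parentIdx (l ++ [w]) x = l.length := by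
  have := parentIdx_eq_length h
  rw [parentIdx, List.findIdx_append]
  simp_all [parentIdx, List.findIdx_cons]

end Parent

section Key

variable {V : Type*} [Fintype V] [LinearOrder V] (G : SimpleGraph V) [DecidableRel G.Adj]

def sortedNeighbors (w : V) : List V := (G.neighborFinset w).sort

def key (d : ℕ) (l : List V) (x : V) : ℕ :=
  G.parentIdx l x * d + (G.sortedNeighbors (G.parent l x)).idxOf x

def decodeKey (d : ℕ) (l : List V) (k : ℕ) : Option V :=
  l[k / d]?.bind fun p => (G.sortedNeighbors p)[k % d]?

variable {G} {d : ℕ} {l : List V} {x : V}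

lemma mem_sortedNeighbors {w : V} : x ∈ G.sortedNeighbors w ↔ G.Adj w x := by
  simp [sortedNeighbors]

lemma length_sortedNeighbors (w : V) : (G.sortedNeighbors w).length = G.degree w := by
  simp [sortedNeighbors]

lemma idxOf_lt_of_degree_le (hd : ∀ w, G.degree w ≤ d) (h : ∃ y ∈ l, G.Adj y x) :
    (G.sortedNeighbors (G.parent l x)).idxOf x < d :=
  (List.idxOf_lt_length_iff.2 (mem_sortedNeighbors.2 (adj_parent h))).trans_le
    ((length_sortedNeighbors _).trans_le (hd _))

lemma decodeKey_key (hd : ∀ w, G.degree w ≤ d) (h : ∃ y ∈ l, G.Adj y x) :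
    G.decodeKey d l (G.key d l x) = some x := by
  have hi := idxOf_lt_of_degree_le hd h
  have hdiv : G.key d l x / d = G.parentIdx l x := by
    rw [key, mul_comm, Nat.mul_add_div hi.pos, Nat.div_eq_of_lt hi, add_zero]
  have hmod : G.key d l x % d = (G.sortedNeighbors (G.parent l x)).idxOf x := by
    rw [key, add_comm, Nat.add_mul_mod_self_right, Nat.mod_eq_of_lt hi]
  rw [decodeKey, hdiv, hmod, getElem?_parentIdx h, Option.bind_some,
    List.getElem?_idxOf (mem_sortedNeighbors.2 (adj_parent h))]

lemma key_injOn (hd : ∀ w, G.degree w ≤ d) :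
    Set.InjOn (G.key d l) {x | ∃ y ∈ l, G.Adj y x} := fun x hx y hy hxy =>
  Option.some_injective _ <| by rw [← decodeKey_key hd hx, ← decodeKey_key hd hy, hxy]

lemma key_lt_length_mul (hd : ∀ w, G.degree w ≤ d) (h : ∃ y ∈ l, G.Adj y x) :
    G.key d l x < l.length * d := by
  have hi := idxOf_lt_of_degree_le hd h
  calc G.key d l x < (G.parentIdx l x + 1) * d := by rw [key]; linarith
    _ ≤ l.length * d := Nat.mul_le_mul_right d (parentIdx_lt_length h)

lemma key_append (l' : List V) (h : ∃ y ∈ l, G.Adj y x) :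
    G.key d (l ++ l') x = G.key d l x := by
  rw [key, key, parent_append l' h, parentIdx_append l' h]

lemma length_mul_le_key_append {w : V} (h : ¬ ∃ y ∈ l, G.Adj y x) (hw : G.Adj w x) :
    l.length * d ≤ G.key d (l ++ [w]) x := by
  rw [key, parentIdx_append_singleton h hw]
  exact Nat.le_add_right _ _

end Key

section Frontier

variable {V : Type*} [DecidableEq V] (G : SimpleGraph V) [DecidableRel G.Adj] (S : Finset V)

def frontier (l : List V) : Finset V := {x ∈ S | x ∉ l ∧ ∃ y ∈ l, G.Adj y x}

variable {G S} {l : List V} {x : V}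

lemma mem_frontier : x ∈ G.frontier S l ↔ x ∈ S ∧ x ∉ l ∧ ∃ y ∈ l, G.Adj y x := by
  simp [frontier]

lemma frontier_nonempty (hconn : (G.induce (S : Set V)).Connected) {y : V} (hyS : y ∈ S)
    (hyl : y ∈ l) (hxS : x ∈ S) (hxl : x ∉ l) : (G.frontier S l).Nonempty := by
  obtain ⟨p⟩ := hconn.preconnected ⟨y, hyS⟩ ⟨x, hxS⟩
  obtain ⟨e, -, he, he'⟩ := p.exists_boundary_dart {z | (z : V) ∈ l} hyl hxl
  exact ⟨e.snd, mem_frontier.2 ⟨e.snd.2, he', e.fst, he, e.adj⟩⟩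

end Frontier

section Exploration

variable {V : Type*} [Fintype V] [LinearOrder V] (G : SimpleGraph V) [DecidableRel G.Adj]
  (d : ℕ) (v : V) (S : Finset V)

noncomputable def nextVertex (l : List V) : V :=
  if h : (G.frontier S l).Nonempty then ((G.frontier S l).exists_min_image (G.key d l) h).choose
  else v

noncomputable def explore : ℕ → List V
  | 0 => [v]
  | n + 1 => explore n ++ [G.nextVertex d v S (explore n)]

noncomputable def exploreKey (n : ℕ) : ℕ :=
  G.key d (G.explore d v S n) (G.nextVertex d v S (G.explore d v S n))

variable {G d v S} {l : List V} {x : V}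

lemma nextVertex_mem_frontier (h : (G.frontier S l).Nonempty) :
    G.nextVertex d v S l ∈ G.frontier S l := by
  rw [nextVertex, dif_pos h]
  exact ((G.frontier S l).exists_min_image (G.key d l) h).choose_spec.1

lemma key_nextVertex_le (hx : x ∈ G.frontier S l) :
    G.key d l (G.nextVertex d v S l) ≤ G.key d l x := by
  rw [nextVertex, dif_pos ⟨x, hx⟩]
  exact ((G.frontier S l).exists_min_image (G.key d l) ⟨x, hx⟩).choose_spec.2 x hx

lemma length_explore (n : ℕ) : (G.explore d v S n).length = n + 1 := by
  induction n with
  | zero => rfl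
  | succ n ih => simp [explore, ih]

lemma mem_explore (n : ℕ) : v ∈ G.explore d v S n := by
  induction n with
  | zero => exact List.mem_singleton_self v
  | succ n ih => exact List.mem_append_left _ ih

variable (hv : v ∈ S) (hconn : (G.induce (S : Set V)).Connected)
include hv hconn

lemma frontier_explore_nonempty {n : ℕ} (hn : n + 1 < S.card) :
    (G.frontier S (G.explore d v S n)).Nonempty := by
  have hlt : (G.explore d v S n).toFinset.card < S.card :=
    (List.toFinset_card_le _).trans_lt (by rwa [length_explore])
  obtain ⟨x, hxS, hxl⟩ := exists_mem_notMem_of_card_lt_card hlt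
  exact frontier_nonempty hconn hv (mem_explore n) hxS (by simpa using hxl)

lemma nextVertex_explore_mem_frontier {n : ℕ} (hn : n + 1 < S.card) :
    G.nextVertex d v S (G.explore d v S n) ∈ G.frontier S (G.explore d v S n) :=
  nextVertex_mem_frontier (frontier_explore_nonempty hv hconn hn)

lemma exists_adj_nextVertex_explore {n : ℕ} (hn : n + 1 < S.card) :
    ∃ y ∈ G.explore d v S n, G.Adj y (G.nextVertex d v S (G.explore d v S n)) :=
  (mem_frontier.1 (nextVertex_explore_mem_frontier hv hconn hn)).2.2

lemma nodup_explore_and_subset : ∀ n, n < S.card →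
    (G.explore d v S n).Nodup ∧ ∀ x ∈ G.explore d v S n, x ∈ S
  | 0, _ => ⟨List.nodup_singleton v, by simpa [explore] using hv⟩
  | n + 1, hn => by
    obtain ⟨hnodup, hsub⟩ := nodup_explore_and_subset n (by omega)
    obtain ⟨hxS, hxl, -⟩ :=
      mem_frontier.1 (nextVertex_explore_mem_frontier (d := d) hv hconn hn)
    refine ⟨hnodup.append (List.nodup_singleton _) (by simpa using hxl), ?_⟩
    simp only [explore, List.mem_append, List.mem_singleton]
    rintro x (hx | rfl)
    exacts [hsub x hx, hxS]

lemma toFinset_explore {m : ℕ} (hcard : S.card = m + 1) : (G.explore d v S m).toFinset = S := by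
  obtain ⟨hnodup, hsub⟩ := nodup_explore_and_subset (d := d) hv hconn m (by omega)
  refine eq_of_subset_of_card_le (fun x hx => hsub x (List.mem_toFinset.1 hx)) ?_
  rw [List.toFinset_card_of_nodup hnodup, length_explore, hcard]

variable (hd : ∀ w, G.degree w ≤ d)
include hd

lemma decodeKey_exploreKey {n : ℕ} (hn : n + 1 < S.card) :
    G.decodeKey d (G.explore d v S n) (G.exploreKey d v S n) =
      some (G.nextVertex d v S (G.explore d v S n)) :=
  decodeKey_key hd (exists_adj_nextVertex_explore hv hconn hn)

lemma exploreKey_lt_succ_mul {n : ℕ} (hn : n + 1 < S.card) :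
    G.exploreKey d v S n < (n + 1) * d := by
  simpa only [length_explore, exploreKey] using
    key_lt_length_mul hd (exists_adj_nextVertex_explore hv hconn hn)

/-- A vertex joining the frontier at step `n + 1` either was already a candidate at step `n`,
and lost to the step-`n` winner, or hangs off the winner, whose position `n + 1` exceeds that of
every earlier parent. -/
lemma exploreKey_lt_exploreKey_succ {n : ℕ} (hn : n + 2 < S.card) :
    G.exploreKey d v S n < G.exploreKey d v S (n + 1) := by
  set l := G.explore d v S n
  set w := G.nextVertex d v S l
  set s := G.nextVertex d v S (l ++ [w])
  have hw : ∃ y ∈ l, G.Adj y w := exists_adj_nextVertex_explore hv hconn (by omega)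
  obtain ⟨hsS, hsl, hs⟩ : s ∈ S ∧ s ∉ l ++ [w] ∧ ∃ y ∈ l ++ [w], G.Adj y s :=
    mem_frontier.1 (nextVertex_explore_mem_frontier hv hconn hn)
  change G.key d l w < G.key d (l ++ [w]) s
  by_cases hc : ∃ y ∈ l, G.Adj y s
  · have hsw : s ≠ w := fun h => hsl (by simp [h])
    rw [key_append _ hc]
    have hs_front : s ∈ G.frontier S l :=
      mem_frontier.2 ⟨hsS, fun h => hsl (List.mem_append_left _ h), hc⟩
    exact (key_nextVertex_le hs_front).lt_of_ne fun h => hsw (key_injOn hd hw hc h).symm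
  · have hws : G.Adj w s := by
      obtain ⟨y, hy, hadj⟩ := hs
      rcases List.mem_append.1 hy with hy | hy
      · exact absurd ⟨y, hy, hadj⟩ hc
      · rwa [List.mem_singleton.1 hy] at hadj
    exact (key_lt_length_mul hd hw).trans_le (length_mul_le_key_append hc hws)

end Exploration

section Encoding

variable {V : Type*} [Fintype V] [LinearOrder V] {G : SimpleGraph V} [DecidableRel G.Adj]
  {d : ℕ} {v : V} {S T : Finset V} {m : ℕ}

lemma exploreKey_strictMonoOn (hv : v ∈ S) (hconn : (G.induce (S : Set V)).Connected)
    (hd : ∀ w, G.degree w ≤ d) (hcard : S.card = m + 1) :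
    StrictMonoOn (G.exploreKey d v S) (Set.Iio m) :=
  strictMonoOn_of_lt_add_one Set.ordConnected_Iio fun n _ _ hn =>
    exploreKey_lt_exploreKey_succ hv hconn hd (by simp only [Set.mem_Iio] at hn; omega)

lemma image_exploreKey_mem_powersetCard (hv : v ∈ S) (hconn : (G.induce (S : Set V)).Connected)
    (hd : ∀ w, G.degree w ≤ d) (hcard : S.card = m + 1) :
    (range m).image (G.exploreKey d v S) ∈ powersetCard m (range (d * m)) := by
  refine mem_powersetCard.2 ⟨fun k hk => ?_, ?_⟩
  · obtain ⟨n, hn, rfl⟩ := mem_image.1 hk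
    rw [mem_range] at hn ⊢
    calc G.exploreKey d v S n < (n + 1) * d := exploreKey_lt_succ_mul hv hconn hd (by omega)
      _ ≤ d * m := by rw [mul_comm]; exact Nat.mul_le_mul_left d hn
  · rw [card_image_of_injOn, card_range]
    simpa using (exploreKey_strictMonoOn hv hconn hd hcard).injOn

lemma explore_eq_of_eqOn_exploreKey (hvS : v ∈ S) (hconnS : (G.induce (S : Set V)).Connected)
    (hvT : v ∈ T) (hconnT : (G.induce (T : Set V)).Connected) (hd : ∀ w, G.degree w ≤ d)
    (hS : m < S.card) (hT : m < T.card)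
    (h : Set.EqOn (G.exploreKey d v S) (G.exploreKey d v T) (Set.Iio m)) :
    G.explore d v S m = G.explore d v T m := by
  induction m with
  | zero => rfl
  | succ m ih =>
    have hl := ih (by omega) (by omega) (h.mono (Set.Iio_subset_Iio m.le_succ))
    have hw : G.nextVertex d v S (G.explore d v S m) = G.nextVertex d v T (G.explore d v T m) :=
      Option.some_injective _ <| by
        rw [← decodeKey_exploreKey hvS hconnS hd hS, ← decodeKey_exploreKey hvT hconnT hd hT,
          hl, h (Set.mem_Iio.2 m.lt_succ_self)]
    rw [explore, explore, hw, hl]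

lemma eq_of_image_exploreKey_eq (hvS : v ∈ S) (hconnS : (G.induce (S : Set V)).Connected)
    (hcardS : S.card = m + 1) (hvT : v ∈ T) (hconnT : (G.induce (T : Set V)).Connected)
    (hcardT : T.card = m + 1) (hd : ∀ w, G.degree w ≤ d)
    (h : (range m).image (G.exploreKey d v S) = (range m).image (G.exploreKey d v T)) :
    S = T := by
  have hkeys := (exploreKey_strictMonoOn hvS hconnS hd hcardS).eqOn_of_image_range_eq
    (exploreKey_strictMonoOn hvT hconnT hd hcardT) h
  rw [← toFinset_explore (d := d) hvS hconnS hcardS,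
    ← toFinset_explore (d := d) hvT hconnT hcardT,
    explore_eq_of_eqOn_exploreKey hvS hconnS hvT hconnT hd (by omega) (by omega) hkeys]

end Encoding

theorem ncard_connected_finsets_le_choose {V : Type*} [Fintype V] (G : SimpleGraph V)
    [DecidableRel G.Adj] {d : ℕ} (hd : ∀ w, G.degree w ≤ d) (v : V) (m : ℕ) :
    {S : Finset V | v ∈ S ∧ S.card = m + 1 ∧ (G.induce (S : Set V)).Connected}.ncard ≤
      (d * m).choose m := by
  let : LinearOrder V := LinearOrder.lift' _ (Fintype.equivFin V).injective
  calc _ ≤ (powersetCard m (range (d * m)) : Set (Finset ℕ)).ncard :=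
        Set.ncard_le_ncard_of_injOn (fun S => (range m).image (G.exploreKey d v S))
          (fun _ hS => image_exploreKey_mem_powersetCard hS.1 hS.2.2 hd hS.2.1)
          (fun _ hS _ hT =>
            eq_of_image_exploreKey_eq hS.1 hS.2.2 hS.2.1 hT.1 hT.2.2 hT.2.1 hd)
          (finite_toSet _)
    _ = (d * m).choose m := by rw [Set.ncard_coe_finset, card_powersetCard, card_range]

end SimpleGraph

theorem stmt_3_general {V : Type*} [Fintype V] (G : SimpleGraph V) [DecidableRel G.Adj]
    (d u : ℕ) (hd : ∀ v : V, G.degree v ≤ d) (v : V) :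
    ({S : Finset V | v ∈ S ∧ S.card = u ∧ (G.induce (S : Set V)).Connected}.ncard : ℝ) ≤
      (Real.exp 1 * d) ^ (u - 1) := by
  rcases u with _ | m
  · have : {S : Finset V | v ∈ S ∧ S.card = 0 ∧ (G.induce (S : Set V)).Connected} = ∅ :=
      Set.eq_empty_of_forall_notMem fun S hS => card_ne_zero_of_mem hS.1 hS.2.1
    rw [this, Set.ncard_empty, Nat.cast_zero]
    positivity
  · calc _ ≤ ((d * m).choose m : ℝ) := by
          exact_mod_cast G.ncard_connected_finsets_le_choose hd v m
      _ ≤ _ := choose_mul_le_exp_mul_pow d m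

/-- In a graph with all degrees at most `d`, the number of connected vertex sets of size `u`
containing a specified vertex `v` is at most `(e·d)^(u-1)`. -/
theorem stmt_3 {V : Type*} [Fintype V] (G : SimpleGraph V) [DecidableRel G.Adj]
    (d u : ℕ) (hu : 1 ≤ u) (hd : ∀ v : V, G.degree v ≤ d) (v : V) :
    ({S : Finset V | v ∈ S ∧ S.card = u ∧ (G.induce (S : Set V)).Connected}.ncard : ℝ) ≤
      (Real.exp 1 * d) ^ (u - 1) :=
  stmt_3_general G d u hd v
end

section
/- Let k ≥ 1 and let A be a family of k-subsets of [2k] with |A| = C(2k - t, k) for some real t ≥ 1 (using the generalized binomial coefficient C(x,k) = x(x-1)···(x-k+1)/k!). Then the upper shadow ∇A = {y ∈ C([2k], k+1) : ∃ x ∈ A, y ⊇ x} satisfies |∇A| ≥ ((t-1)/(k-t+1))·|A| + |A|, i.e., δ(A) := (|∇A| - |A|)/|A| ≥ (t-1)/(k-t+1). -/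
/-!
Pass to complements: `Aᶜˢ` is a `k`-uniform family on `[2k]` whose shadow is `(∇A)ᶜˢ`, so it
suffices to bound lower shadows. For those we prove Lovász's real form of Kruskal–Katona,
`|𝒜| ≥ C(x, m + 1) → |∂𝒜| ≥ C(x, m)`, following Frankl: after compressing every `v` towards a
fixed element `a`, the shadow of the sets avoiding `a` lies inside the link of `a`, which forces
`|link a| ≥ C(x - 1, m)`; induction on `m` applied to the link and Pascal's rule finish. With
`x = 2k - t` the identity `C(x, k - 1) (x - k + 1) = k C(x, k)` turns this into the claimed ratio,
since `x - k + 1 = k - t + 1`.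
-/

open Finset UV
open scoped FinsetFamily

namespace Ring

variable {K : Type*} [Field K] [LinearOrder K] [IsStrictOrderedRing K] {x y : K} {k : ℕ}

lemma choose_eq_prod_range_div (x : K) (k : ℕ) :
    choose x k = (∏ i ∈ range k, (x - i)) / k.factorial := by
  rw [choose_eq_smul, ← descPochhammer_eval_eq_prod_range, smul_eq_mul, inv_mul_eq_div,
    ← descPochhammer_map (algebraMap ℤ K), Polynomial.eval_map_algebraMap,
    Polynomial.aeval_eq_smeval]

lemma choose_nonneg (hx : (k : K) - 1 ≤ x) : 0 ≤ choose x k := by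
  rw [choose_eq_prod_range_div, ← descPochhammer_eval_eq_prod_range]
  exact div_nonneg (descPochhammer_nonneg hx) (by positivity)

lemma choose_pos (hx : (k : K) - 1 < x) : 0 < choose x k := by
  rw [choose_eq_prod_range_div, ← descPochhammer_eval_eq_prod_range]
  exact div_pos (descPochhammer_pos hx) (by positivity)

lemma choose_le_choose (hx : (k : K) - 1 ≤ x) (hxy : x ≤ y) : choose x k ≤ choose y k := by
  rw [choose_eq_prod_range_div, choose_eq_prod_range_div]
  refine div_le_div_of_nonneg_right (prod_le_prod (fun i hi ↦ ?_) fun i _ ↦ by linarith)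
    (by positivity)
  have : (i : K) + 1 ≤ k := by exact_mod_cast mem_range.1 hi
  linarith

lemma choose_lt_choose (hk : k ≠ 0) (hx : (k : K) - 1 ≤ x) (hxy : x < y) :
    choose x k < choose y k := by
  rcases hx.eq_or_lt with rfl | hx
  · rw [← Nat.cast_pred (Nat.pos_of_ne_zero hk), choose_natCast,
      Nat.choose_eq_zero_of_lt (Nat.sub_one_lt hk), Nat.cast_zero]
    exact choose_pos hxy
  rw [choose_eq_prod_range_div, choose_eq_prod_range_div]
  gcongr
  refine prod_lt_prod_of_nonempty (fun i hi ↦ ?_) (fun i _ ↦ by linarith) (nonempty_range_iff.2 hk)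
  have : (i : K) + 1 ≤ k := by exact_mod_cast mem_range.1 hi
  linarith

lemma choose_natCast_self (k : ℕ) : choose (k : K) k = 1 := by
  rw [choose_natCast, Nat.choose_self, Nat.cast_one]

lemma one_le_choose (hx : (k : K) ≤ x) : 1 ≤ choose x k :=
  choose_natCast_self (K := K) k ▸ choose_le_choose (by linarith) hx

lemma choose_mul_sub (x : K) (k : ℕ) : choose x k * (x - k) = (k + 1) * choose x (k + 1) := by
  have := choose_smul_choose x (Nat.le_add_right k 1)
  rw [Nat.choose_succ_self_right, Nat.add_sub_cancel_left, choose_one_right, nsmul_eq_mul] at this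
  push_cast at this
  linear_combination -this

lemma choose_succ_eq_choose_sub_one_add (x : K) (k : ℕ) :
    choose x (k + 1) = choose (x - 1) k + choose (x - 1) (k + 1) := by
  simpa using choose_succ_succ (x - 1) k

end Ring

namespace Finset

variable {α : Type*} {𝒜 : Finset (Finset α)} {a : α} {r : ℕ}

lemma nonempty_of_choose_le_card {k : ℕ} {x : ℝ} (hx : k ≤ x) (hcard : Ring.choose x k ≤ #𝒜) :
    𝒜.Nonempty := by
  rw [← card_pos, ← Nat.cast_pos (α := ℝ)]
  exact zero_lt_one.trans_le ((Ring.one_le_choose hx).trans hcard)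

variable [DecidableEq α]

lemma _root_.Set.Sized.shadow_nonempty (h𝒜 : (𝒜 : Set (Finset α)).Sized (r + 1))
    (hne : 𝒜.Nonempty) : (∂ 𝒜).Nonempty := by
  obtain ⟨s, hs⟩ := hne
  obtain ⟨b, hb⟩ := card_pos.1 (by rw [h𝒜 hs]; exact r.succ_pos)
  exact ⟨_, erase_mem_shadow hs hb⟩

lemma memberSubfamily_subset_nonMemberSubfamily_shadow :
    𝒜.memberSubfamily a ⊆ (∂ 𝒜).nonMemberSubfamily a := by
  intro s hs
  obtain ⟨hs𝒜, has⟩ := mem_memberSubfamily.1 hs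
  refine mem_nonMemberSubfamily.2 ⟨?_, has⟩
  simpa [erase_insert has] using erase_mem_shadow hs𝒜 (mem_insert_self a s)

lemma shadow_memberSubfamily_subset_memberSubfamily_shadow :
    ∂ (𝒜.memberSubfamily a) ⊆ (∂ 𝒜).memberSubfamily a := by
  intro t ht
  obtain ⟨s, hs, b, hb, rfl⟩ := mem_shadow_iff.1 ht
  obtain ⟨hs𝒜, has⟩ := mem_memberSubfamily.1 hs
  have hab : a ≠ b := fun h ↦ has (h ▸ hb)
  refine mem_memberSubfamily.2 ⟨?_, fun h ↦ has (mem_of_mem_erase h)⟩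
  rw [← erase_insert_of_ne hab]
  exact erase_mem_shadow hs𝒜 (mem_insert_of_mem hb)

lemma card_memberSubfamily_add_card_shadow_memberSubfamily_le (a : α) (𝒜 : Finset (Finset α)) :
    #(𝒜.memberSubfamily a) + #(∂ (𝒜.memberSubfamily a)) ≤ #(∂ 𝒜) := by
  rw [← card_memberSubfamily_add_card_nonMemberSubfamily a (∂ 𝒜), add_comm]
  exact add_le_add (card_le_card shadow_memberSubfamily_subset_memberSubfamily_shadow)
    (card_le_card memberSubfamily_subset_nonMemberSubfamily_shadow)

lemma shadow_nonMemberSubfamily_subset_memberSubfamily (h𝒜 : ∀ v, IsCompressed {a} {v} 𝒜) :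
    ∂ (𝒜.nonMemberSubfamily a) ⊆ 𝒜.memberSubfamily a := by
  intro t ht
  obtain ⟨s, hs, u, hu, rfl⟩ := mem_shadow_iff.1 ht
  obtain ⟨hs𝒜, has⟩ := mem_nonMemberSubfamily.1 hs
  have hcomp : compress {a} {u} s = insert a (s.erase u) := by
    rw [compress_of_disjoint_of_le (disjoint_singleton_left.2 has) (singleton_subset_iff.2 hu)]
    ext b
    simp only [mem_sdiff, mem_union, mem_singleton, mem_insert, mem_erase, sup_eq_union]
    grind
  refine mem_memberSubfamily.2 ⟨?_, fun h ↦ has (mem_of_mem_erase h)⟩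
  rw [← hcomp, ← (h𝒜 u).eq]
  exact compress_mem_compression hs𝒜

lemma card_nonMemberSubfamily_compression_lt {v : α} (h : 𝓒 {a} {v} 𝒜 ≠ 𝒜) :
    #((𝓒 {a} {v} 𝒜).nonMemberSubfamily a) < #(𝒜.nonMemberSubfamily a) := by
  have hsub : (𝓒 {a} {v} 𝒜).nonMemberSubfamily a ⊆ 𝒜.nonMemberSubfamily a := by
    intro s hs
    obtain ⟨hs𝒞, has⟩ := mem_nonMemberSubfamily.1 hs
    refine mem_nonMemberSubfamily.2 ⟨?_, has⟩
    by_contra hs𝒜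
    exact has (singleton_subset_iff.1 (le_of_mem_compression_of_notMem hs𝒞 hs𝒜))
  obtain ⟨s, hs𝒜, hs𝒞⟩ : ∃ s ∈ 𝒜, s ∉ 𝓒 {a} {v} 𝒜 := by
    by_contra! h𝒜
    exact h (eq_of_subset_of_card_le h𝒜 (card_compression _ _ _).le).symm
  have hcs : compress {a} {v} s ≠ s := fun hcs ↦ hs𝒞 (mem_compression.2 (.inl ⟨hs𝒜, by rwa [hcs]⟩))
  have has : a ∉ s := by
    contrapose! hcs
    exact if_neg fun h ↦ disjoint_singleton_left.1 h.1 hcs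
  refine card_lt_card ((ssubset_iff_of_subset hsub).2 ⟨s, mem_nonMemberSubfamily.2 ⟨hs𝒜, has⟩, ?_⟩)
  exact fun hs ↦ hs𝒞 (mem_nonMemberSubfamily.1 hs).1

lemma exists_isCompressed_singleton (a : α) (𝒜 : Finset (Finset α))
    (h𝒜 : (𝒜 : Set (Finset α)).Sized r) :
    ∃ ℬ : Finset (Finset α), #(∂ ℬ) ≤ #(∂ 𝒜) ∧ #ℬ = #𝒜 ∧ (ℬ : Set (Finset α)).Sized r ∧
      ∀ v, IsCompressed {a} {v} ℬ := by
  by_cases hc : ∀ v, IsCompressed {a} {v} 𝒜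
  · exact ⟨𝒜, le_rfl, rfl, h𝒜, hc⟩
  obtain ⟨v, hv⟩ := not_forall.1 hc
  have := card_nonMemberSubfamily_compression_lt hv
  obtain ⟨ℬ, hshadow, hcard, hsized, hℬ⟩ :=
    exists_isCompressed_singleton a (𝓒 {a} {v} 𝒜) (h𝒜.uvCompression (by simp))
  refine ⟨ℬ, hshadow.trans ?_, hcard.trans (card_compression _ _ _), hsized, hℬ⟩
  refine card_shadow_compression_le _ _ fun b hb ↦ ⟨v, mem_singleton_self v, ?_⟩
  rw [mem_singleton.1 hb, erase_singleton, erase_singleton]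
  exact isCompressed_self _ _
termination_by #(𝒜.nonMemberSubfamily a)

lemma _root_.Set.Sized.memberSubfamily (h𝒜 : (𝒜 : Set (Finset α)).Sized (r + 1)) :
    (𝒜.memberSubfamily a : Set (Finset α)).Sized r := by
  intro s hs
  obtain ⟨hs𝒜, has⟩ := mem_memberSubfamily.1 hs
  simpa [card_insert_of_notMem has] using h𝒜 hs𝒜

lemma _root_.Set.Sized.nonMemberSubfamily (h𝒜 : (𝒜 : Set (Finset α)).Sized r) :
    (𝒜.nonMemberSubfamily a : Set (Finset α)).Sized r :=
  h𝒜.mono (coe_subset.2 (filter_subset _ _))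

lemma choose_sub_one_le_card_memberSubfamily {m : ℕ} {ℬ : Finset (Finset α)}
    (hℬ : (ℬ : Set (Finset α)).Sized (m + 1)) (hcomp : ∀ v, IsCompressed {a} {v} ℬ)
    {x : ℝ} (hx : m + 1 ≤ x) (hcard : Ring.choose x (m + 1) ≤ #ℬ)
    (ih : ∀ 𝒞 : Finset (Finset α), (𝒞 : Set (Finset α)).Sized (m + 1) → #𝒞 < #ℬ →
      ∀ y : ℝ, m + 1 ≤ y → Ring.choose y (m + 1) ≤ #𝒞 → Ring.choose y m ≤ #(∂ 𝒞)) :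
    Ring.choose (x - 1) m ≤ #(ℬ.memberSubfamily a) := by
  by_contra! hℬ₁
  have hsplit := card_memberSubfamily_add_card_nonMemberSubfamily a ℬ
  have hpascal := Ring.choose_succ_eq_choose_sub_one_add x m
  have hℬ₀ : Ring.choose (x - 1) (m + 1) < #(ℬ.nonMemberSubfamily a) := by
    have : (#ℬ : ℝ) = #(ℬ.memberSubfamily a) + #(ℬ.nonMemberSubfamily a) := by
      exact_mod_cast hsplit.symm
    linarith
  have hne₀ : (ℬ.nonMemberSubfamily a).Nonempty := by
    rw [← card_pos, ← Nat.cast_pos (α := ℝ)]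
    exact (Ring.choose_nonneg (by push_cast; linarith)).trans_lt hℬ₀
  have hshadow : ∂ (ℬ.nonMemberSubfamily a) ⊆ ℬ.memberSubfamily a :=
    shadow_nonMemberSubfamily_subset_memberSubfamily hcomp
  have hlt : #(ℬ.nonMemberSubfamily a) < #ℬ := by
    have := card_pos.2 ((hℬ.nonMemberSubfamily.shadow_nonempty hne₀).mono hshadow)
    omega
  -- `x - 1` itself may lie below the range `m + 1 ≤ y` of the induction hypothesis.
  obtain ⟨y, hxy, hmy, hy⟩ : ∃ y : ℝ, x - 1 ≤ y ∧ m + 1 ≤ y ∧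
      Ring.choose y (m + 1) ≤ #(ℬ.nonMemberSubfamily a) := by
    rcases le_total (x - 1) (m + 1) with h | h
    · refine ⟨m + 1, h, le_rfl, ?_⟩
      rw [← Nat.cast_add_one, Ring.choose_natCast_self, Nat.one_le_cast]
      exact card_pos.2 hne₀
    · exact ⟨x - 1, le_rfl, h, hℬ₀.le⟩
  have := ih _ hℬ.nonMemberSubfamily hlt y hmy hy
  have := Ring.choose_le_choose (k := m) (by linarith) hxy
  have : (#(∂ (ℬ.nonMemberSubfamily a)) : ℝ) ≤ #(ℬ.memberSubfamily a) := by
    exact_mod_cast card_le_card hshadow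
  linarith

theorem choose_le_card_shadow {m : ℕ} {𝒜 : Finset (Finset α)}
    (h𝒜 : (𝒜 : Set (Finset α)).Sized (m + 1)) {x : ℝ} (hx : m + 1 ≤ x)
    (hcard : Ring.choose x (m + 1) ≤ #𝒜) : Ring.choose x m ≤ #(∂ 𝒜) := by
  induction m generalizing 𝒜 x with
  | zero =>
    have hne := nonempty_of_choose_le_card (by exact_mod_cast hx) hcard
    simpa [Ring.choose_zero_right] using card_pos.2 (h𝒜.shadow_nonempty hne)
  | succ m ih =>
    induction hn : #𝒜 using Nat.strong_induction_on generalizing 𝒜 x with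
    | _ n ihn =>
    obtain ⟨s, hs⟩ := nonempty_of_choose_le_card (by exact_mod_cast hx) hcard
    obtain ⟨a, -⟩ := card_pos.1 (by rw [h𝒜 hs]; omega)
    obtain ⟨ℬ, hshadow, hℬ𝒜, hℬ, hcomp⟩ := exists_isCompressed_singleton a 𝒜 h𝒜
    have h₁ := choose_sub_one_le_card_memberSubfamily hℬ hcomp hx (hℬ𝒜 ▸ hcard)
      fun 𝒞 h𝒞 hlt y hy hy𝒞 ↦ ihn _ (hn ▸ hℬ𝒜 ▸ hlt) h𝒞 hy hy𝒞 rfl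
    have h₂ := ih hℬ.memberSubfamily (by push_cast at hx ⊢; linarith) h₁
    have h₃ := card_memberSubfamily_add_card_shadow_memberSubfamily_le a ℬ
    have hpascal := Ring.choose_succ_eq_choose_sub_one_add x m
    have : (#(ℬ.memberSubfamily a) + #(∂ (ℬ.memberSubfamily a)) : ℝ) ≤ #(∂ 𝒜) := by
      exact_mod_cast h₃.trans hshadow
    linarith

theorem succ_mul_card_le_sub_mul_card_shadow {m : ℕ} {𝒜 : Finset (Finset α)}
    (h𝒜 : (𝒜 : Set (Finset α)).Sized (m + 1)) {x : ℝ} (hx : m ≤ x)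
    (hcard : #𝒜 = Ring.choose x (m + 1)) : (m + 1) * #𝒜 ≤ (x - m) * #(∂ 𝒜) := by
  obtain hxm | hxm := lt_or_ge x (m + 1)
  · have : #𝒜 = 0 := by
      rw [← Nat.cast_lt_one (α := ℝ), hcard, ← Ring.choose_natCast_self (K := ℝ) (m + 1)]
      exact Ring.choose_lt_choose m.succ_ne_zero (by push_cast; linarith) (by push_cast; exact hxm)
    rw [this, Nat.cast_zero, mul_zero]
    exact mul_nonneg (by linarith) (Nat.cast_nonneg _)
  calc (m + 1) * (#𝒜 : ℝ) = Ring.choose x m * (x - m) := by rw [hcard, Ring.choose_mul_sub]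
    _ ≤ (x - m) * #(∂ 𝒜) := by
      rw [mul_comm]
      exact mul_le_mul_of_nonneg_left (choose_le_card_shadow h𝒜 hxm hcard.ge) (by linarith)

end Finset

theorem stmt_5_general (k : ℕ) (hk : 1 ≤ k) (t : ℝ)
    (A : Finset (Finset (Fin (2 * k)))) (hA : ∀ s ∈ A, s.card = k)
    (hcard : (A.card : ℝ) = (∏ i ∈ Finset.range k, ((2 * k : ℝ) - t - i)) / (k.factorial)) :
    ((t - 1) / ((k : ℝ) - t + 1)) * A.card + A.card ≤ (A.upShadow.card : ℝ) := by
  obtain ⟨m, rfl⟩ : ∃ m, k = m + 1 := ⟨k - 1, by omega⟩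
  have hsized : (Aᶜˢ : Set (Finset (Fin (2 * (m + 1))))).Sized (m + 1) := by
    convert Set.Sized.compls (n := m + 1) hA using 1
    simp only [Fintype.card_fin]
    omega
  have hchoose : #Aᶜˢ = Ring.choose (2 * (m + 1 : ℕ) - t) (m + 1) := by
    rw [card_compls, hcard, Ring.choose_eq_prod_range_div]
  push_cast at hchoose ⊢
  have hA₀ : (0 : ℝ) ≤ #A := Nat.cast_nonneg _
  have hup₀ : (0 : ℝ) ≤ #(∂⁺ A) := Nat.cast_nonneg _
  rcases lt_or_ge ((m : ℝ) + 1 - t + 1) 0 with hD | hD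
  · have : (t - 1) / ((m : ℝ) + 1 - t + 1) ≤ -1 := by
      rw [div_le_iff_of_neg hD]
      linarith
    linarith [mul_le_mul_of_nonneg_right this hA₀]
  have key := succ_mul_card_le_sub_mul_card_shadow hsized (by linarith) hchoose
  rw [shadow_compls, card_compls, card_compls] at key
  rcases hD.eq_or_lt with hD | hD
  · -- here `(t - 1) / 0 = 0`, and `key` forces `|A| = 0`
    rw [show 2 * ((m : ℝ) + 1) - t - m = 0 by linarith, zero_mul] at key
    rw [← hD, div_zero, zero_mul, zero_add]
    linarith [nonpos_of_mul_nonpos_right key (by positivity)]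
  · rw [div_mul_eq_mul_div, div_add' _ _ _ hD.ne', div_le_iff₀ hD]
    linear_combination key

/-- Lovász form of Kruskal–Katona for upper shadows: if `A` is a family of `k`-subsets of
`[2k]` with `|A| = C(2k-t, k)` (generalized binomial coefficient, `t ≥ 1` real), then
`|∇A| ≥ ((t-1)/(k-t+1))·|A| + |A|`. -/
theorem stmt_5 (k : ℕ) (hk : 1 ≤ k) (t : ℝ) (ht : 1 ≤ t)
    (A : Finset (Finset (Fin (2 * k)))) (hA : ∀ s ∈ A, s.card = k)
    (hcard : (A.card : ℝ) = (∏ i ∈ Finset.range k, ((2 * k : ℝ) - t - i)) / (k.factorial)) :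
    ((t - 1) / ((k : ℝ) - t + 1)) * A.card + A.card ≤ (A.upShadow.card : ℝ) :=
  stmt_5_general k hk t A hA hcard
end

section
/- Let n = 2k+1 and H a maximal intersecting family of k-subsets of [n]. For any x ∈ [n], with A = H \ K_x, J = K_x \ H, and G = N(A) the upper shadow of A in (k+1)-subsets of [n]\{x}, we have G = J^c := {[n] \ T : T ∈ J}. In particular, for any subfamily X of the k-subsets of [n], |X ∩ A| - |X ∩ J| = |X ∩ H| - |X ∩ K_x|. -/
/-!
A `(k+1)`-set `y` avoiding `x` contains a member of `H` exactly when its complement, a `k`-set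
through `x`, misses `H`: if `a ∈ H` lies in `y` then `yᶜ` is disjoint from `a`, so `yᶜ ∉ H` since
`H` is intersecting; conversely, if `yᶜ ∉ H` then by maximality some `s ∈ H` is disjoint from
`yᶜ`, i.e. `s ⊆ y`, and `x ∉ s` because `x ∉ y`. The counting identity is inclusion–exclusion
for `X ∩ H` and `X ∩ K_x`, which on `k`-sets differ from `A` and `J` only by `H ∩ K_x`.
-/

open Finset

namespace Finset

variable {α : Type*} [DecidableEq α]

lemma card_sdiff_sub_card_sdiff (s t : Finset α) :
    (#(s \ t) : ℤ) - #(t \ s) = #s - #t := by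
  have hs := card_sdiff_add_card_inter s t
  have ht := card_sdiff_add_card_inter t s
  rw [inter_comm] at ht
  omega

variable [Fintype α] {H : Finset (Finset α)}

lemma compl_notMem_of_subset (hint : ∀ s ∈ H, ∀ t ∈ H, (s ∩ t).Nonempty)
    {a y : Finset α} (ha : a ∈ H) (hay : a ⊆ y) : yᶜ ∉ H := fun hy ↦ by
  obtain ⟨z, hz⟩ := hint yᶜ hy a ha
  rw [mem_inter, mem_compl] at hz
  exact hz.1 (hay hz.2)

lemma exists_subset_compl_of_notMem {k : ℕ}
    (hmax : ∀ C : Finset α, #C = k → (∀ s ∈ H, (C ∩ s).Nonempty) → C ∈ H)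
    {T : Finset α} (hT : #T = k) (hTH : T ∉ H) : ∃ s ∈ H, s ⊆ Tᶜ := by
  obtain ⟨s, hsH, hs⟩ : ∃ s ∈ H, ¬ (T ∩ s).Nonempty := by
    by_contra! h
    exact hTH (hmax T hT h)
  rw [not_nonempty_iff_eq_empty] at hs
  exact ⟨s, hsH, subset_compl_iff_disjoint_left.2 (disjoint_iff_inter_eq_empty.2 hs)⟩

lemma card_eq_succ_iff_card_compl_eq {k : ℕ} (hα : Fintype.card α = 2 * k + 1) (y : Finset α) :
    #y = k + 1 ↔ #yᶜ = k := by
  have := card_le_univ y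
  rw [card_compl]
  omega

end Finset

theorem stmt_11_general (k n : ℕ) (hn : n = 2 * k + 1)
    (H : Finset (Finset (Fin n)))
    (hint : ∀ s ∈ H, ∀ t ∈ H, (s ∩ t).Nonempty)
    (hmax : ∀ C : Finset (Fin n), C.card = k → (∀ s ∈ H, (C ∩ s).Nonempty) → C ∈ H)
    (x : Fin n) (X : Finset (Finset (Fin n))) (hX : ∀ s ∈ X, s.card = k) :
    let Kx : Finset (Finset (Fin n)) :=
      (Finset.powersetCard k (Finset.univ : Finset (Fin n))).filter (fun s => x ∈ s)
    let A : Finset (Finset (Fin n)) := H.filter (fun s => x ∉ s)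
    let J : Finset (Finset (Fin n)) := Kx \ H
    let G : Finset (Finset (Fin n)) :=
      (Finset.powersetCard (k + 1) (Finset.univ : Finset (Fin n))).filter
        (fun y => x ∉ y ∧ ∃ a ∈ A, a ⊆ y)
    G = J.image (fun T => Tᶜ) ∧
      ((X ∩ A).card : ℤ) - (X ∩ J).card = ((X ∩ H).card : ℤ) - (X ∩ Kx).card := by
  intro Kx A J G
  have hα : Fintype.card (Fin n) = 2 * k + 1 := by rw [Fintype.card_fin, hn]
  refine ⟨?_, ?_⟩
  · ext y
    simp only [G, J, Kx, A, image_compl, mem_compls, mem_filter, mem_sdiff, mem_powersetCard_univ,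
      mem_compl, card_eq_succ_iff_card_compl_eq hα, and_assoc]
    refine and_congr_right fun hy ↦ and_congr_right fun hxy ↦ ⟨?_, fun hyH ↦ ?_⟩
    · rintro ⟨a, ha, -, hay⟩
      exact compl_notMem_of_subset hint ha hay
    · obtain ⟨s, hsH, hsy⟩ := exists_subset_compl_of_notMem hmax hy hyH
      rw [compl_compl] at hsy
      exact ⟨s, hsH, fun hxs ↦ hxy (hsy hxs), hsy⟩
  · have hKx : ∀ s ∈ X, s ∈ Kx ↔ x ∈ s := fun s hs ↦ by
      simp [Kx, hX s hs]
    have hA : X ∩ A = (X ∩ H) \ (X ∩ Kx) := by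
      ext s
      by_cases hs : s ∈ X
      · simp [A, hs, hKx s hs]
      · simp [hs]
    have hJ : X ∩ J = (X ∩ Kx) \ (X ∩ H) := by
      ext s
      by_cases hs : s ∈ X
      · simp [J, hs, hKx s hs]
      · simp [hs]
    rw [hA, hJ, card_sdiff_sub_card_sdiff]

/-- Let `n = 2k+1` and `H` a maximal intersecting family of `k`-subsets of `[n]`. For any
`x`, with `A = H \ K_x`, `J = K_x \ H` and `G = N(A)` the upper shadow of `A` in the
`(k+1)`-subsets of `[n]\{x}`, we have `G = Jᶜ := {[n]\T : T ∈ J}`; in particular, for any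
family `X` of `k`-subsets of `[n]`, `|X∩A| - |X∩J| = |X∩H| - |X∩K_x|`. -/
theorem stmt_11 (k n : ℕ) (hk : 0 < k) (hn : n = 2 * k + 1)
    (H : Finset (Finset (Fin n))) (hH : ∀ s ∈ H, s.card = k)
    (hint : ∀ s ∈ H, ∀ t ∈ H, (s ∩ t).Nonempty)
    (hmax : ∀ C : Finset (Fin n), C.card = k → (∀ s ∈ H, (C ∩ s).Nonempty) → C ∈ H)
    (x : Fin n) (X : Finset (Finset (Fin n))) (hX : ∀ s ∈ X, s.card = k) :
    let Kx : Finset (Finset (Fin n)) :=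
      (Finset.powersetCard k (Finset.univ : Finset (Fin n))).filter (fun s => x ∈ s)
    let A : Finset (Finset (Fin n)) := H.filter (fun s => x ∉ s)
    let J : Finset (Finset (Fin n)) := Kx \ H
    let G : Finset (Finset (Fin n)) :=
      (Finset.powersetCard (k + 1) (Finset.univ : Finset (Fin n))).filter
        (fun y => x ∉ y ∧ ∃ a ∈ A, a ⊆ y)
    G = J.image (fun T => Tᶜ) ∧
      ((X ∩ A).card : ℤ) - (X ∩ J).card = ((X ∩ H).card : ℤ) - (X ∩ Kx).card :=
  stmt_11_general k n hn H hint hmax x X hX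
end

section
/- Let n be even and let X ⊆ 2^{[n]} be a family of subsets of [n] such that: for every i < n/2 and every closed A ⊆ C([n], i), |X ∩ ∇(A)| > |X ∩ A| whenever A ≠ ∅, and for every i > n/2 and every closed B ⊆ C([n], i), |X ∩ ∂(B)| > |X ∩ B| whenever B ≠ ∅. Then every maximum-size antichain of X is contained in C([n], n/2); in particular the width of X equals |X ∩ C([n], n/2)|. -/
open Finset

private lemma up_closure {n : ℕ} (i : ℕ) (A : Finset (Finset (Fin n)))
    (hA : ∀ s ∈ A, s.card = i) :
    ∃ A' : Finset (Finset (Fin n)),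
      (∀ s ∈ A', s.card = i) ∧ A ⊆ A' ∧ Finset.upShadow A' = Finset.upShadow A ∧
      (∀ B : Finset (Fin n), B.card = i →
        Finset.upShadow {B} ⊆ Finset.upShadow A' → B ∈ A') := by
  classical
  refine ⟨univ.filter (fun B => B.card = i ∧ Finset.upShadow {B} ⊆ Finset.upShadow A),
    ?_, ?_, ?_, ?_⟩
  · intro s hs; exact (mem_filter.1 hs).2.1
  · intro a ha
    refine mem_filter.2 ⟨mem_univ _, hA a ha, upShadow_monotone ?_⟩
    simp [singleton_subset_iff, ha]
  · apply subset_antisymm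
    · intro t ht
      obtain ⟨b, hb, hbt, hc⟩ := mem_upShadow_iff_exists_mem_card_add_one.1 ht
      exact (mem_filter.1 hb).2.2
        (mem_upShadow_iff_exists_mem_card_add_one.2 ⟨b, mem_singleton_self b, hbt, hc⟩)
    · apply upShadow_monotone
      intro a ha
      refine mem_filter.2 ⟨mem_univ _, hA a ha, upShadow_monotone ?_⟩
      simp [singleton_subset_iff, ha]
  · intro B hB hsub
    refine mem_filter.2 ⟨mem_univ _, hB, fun t ht => ?_⟩
    have := hsub ht
    obtain ⟨b, hb, hbt, hc⟩ := mem_upShadow_iff_exists_mem_card_add_one.1 this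
    exact (mem_filter.1 hb).2.2
      (mem_upShadow_iff_exists_mem_card_add_one.2 ⟨b, mem_singleton_self b, hbt, hc⟩)

private lemma down_closure {n : ℕ} (i : ℕ) (A : Finset (Finset (Fin n)))
    (hA : ∀ s ∈ A, s.card = i) :
    ∃ A' : Finset (Finset (Fin n)),
      (∀ s ∈ A', s.card = i) ∧ A ⊆ A' ∧ Finset.shadow A' = Finset.shadow A ∧
      (∀ B : Finset (Fin n), B.card = i →
        Finset.shadow {B} ⊆ Finset.shadow A' → B ∈ A') := by
  classical
  refine ⟨univ.filter (fun B => B.card = i ∧ Finset.shadow {B} ⊆ Finset.shadow A),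
    ?_, ?_, ?_, ?_⟩
  · intro s hs; exact (mem_filter.1 hs).2.1
  · intro a ha
    refine mem_filter.2 ⟨mem_univ _, hA a ha, shadow_monotone ?_⟩
    simp [singleton_subset_iff, ha]
  · apply subset_antisymm
    · intro t ht
      obtain ⟨b, hb, hbt, hc⟩ := mem_shadow_iff_exists_mem_card_add_one.1 ht
      exact (mem_filter.1 hb).2.2
        (mem_shadow_iff_exists_mem_card_add_one.2 ⟨b, mem_singleton_self b, hbt, hc⟩)
    · apply shadow_monotone
      intro a ha
      refine mem_filter.2 ⟨mem_univ _, hA a ha, shadow_monotone ?_⟩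
      simp [singleton_subset_iff, ha]
  · intro B hB hsub
    refine mem_filter.2 ⟨mem_univ _, hB, fun t ht => ?_⟩
    have := hsub ht
    obtain ⟨b, hb, hbt, hc⟩ := mem_shadow_iff_exists_mem_card_add_one.1 this
    exact (mem_filter.1 hb).2.2
      (mem_shadow_iff_exists_mem_card_add_one.2 ⟨b, mem_singleton_self b, hbt, hc⟩)

private lemma up_step {n : ℕ} (X : Finset (Finset (Fin n)))
    (hup : ∀ i, i < n / 2 → ∀ A : Finset (Finset (Fin n)),
      (∀ s ∈ A, s.card = i) → A.Nonempty →
      (∀ B : Finset (Fin n), B.card = i →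
        Finset.upShadow {B} ⊆ Finset.upShadow A → B ∈ A) →
      (X ∩ A).card < (X ∩ Finset.upShadow A).card)
    (S : Finset (Finset (Fin n))) (hSX : S ⊆ X)
    (hS : IsAntichain (· ⊆ ·) (S : Set (Finset (Fin n))))
    (i : ℕ) (hi : i < n / 2) (hmin : ∀ s ∈ S, i ≤ s.card)
    (hex : ∃ s ∈ S, s.card = i) :
    ∃ S' : Finset (Finset (Fin n)), S' ⊆ X ∧
      IsAntichain (· ⊆ ·) (S' : Set (Finset (Fin n))) ∧ S.card < S'.card := by
  classical
  set A := S.filter (fun s => s.card = i) with hAdef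
  have hAS : A ⊆ S := filter_subset _ _
  have hAcard : ∀ s ∈ A, s.card = i := fun s hs => (mem_filter.1 hs).2
  obtain ⟨A', hA'card, hAA', hshad, hclosed⟩ := up_closure i A hAcard
  obtain ⟨s₀, hs₀S, hs₀c⟩ := hex
  have hA'ne : A'.Nonempty := ⟨s₀, hAA' (mem_filter.2 ⟨hs₀S, hs₀c⟩)⟩
  have hlt := hup i hi A' hA'card hA'ne hclosed
  rw [hshad] at hlt
  set T := X ∩ Finset.upShadow A with hTdef
  -- facts about T
  have hTX : T ⊆ X := inter_subset_left
  have hTmem : ∀ t ∈ T, ∃ a ∈ A, a ⊆ t ∧ t.card = i + 1 := by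
    intro t ht
    obtain ⟨a, ha, hat, hc⟩ :=
      mem_upShadow_iff_exists_mem_card_add_one.1 (mem_inter.1 ht).2
    exact ⟨a, ha, hat, by rw [hc, hAcard a ha]⟩
  -- cards of S \ A
  have hSAcard : ∀ s ∈ S \ A, i + 1 ≤ s.card := by
    intro s hs
    rcases mem_sdiff.1 hs with ⟨hsS, hsA⟩
    have := hmin s hsS
    rcases Nat.lt_or_ge i s.card with h | h
    · omega
    · exact absurd (show s ∈ A from mem_filter.2 ⟨hsS, le_antisymm h this⟩) hsA
  -- disjointness
  have hdisj : Disjoint (S \ A) T := by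
    rw [disjoint_left]
    intro s hs hsT
    obtain ⟨a, haA, has, hsc⟩ := hTmem s hsT
    have haS : a ∈ S := hAS haA
    have hane : a ≠ s := by
      intro h; rw [h] at haA
      exact (mem_sdiff.1 hs).2 haA
    exact hS (mem_coe.2 haS) (mem_coe.2 (mem_sdiff.1 hs).1) hane has
  refine ⟨(S \ A) ∪ T, ?_, ?_, ?_⟩
  · exact union_subset (fun s hs => hSX (mem_sdiff.1 hs).1) hTX
  · intro x hx y hy hxy
    simp only [coe_union, Set.mem_union, mem_coe] at hx hy
    rcases hx with hx | hx <;> rcases hy with hy | hy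
    · exact hS (mem_coe.2 (mem_sdiff.1 hx).1) (mem_coe.2 (mem_sdiff.1 hy).1) hxy
    · -- x ∈ S \ A, y ∈ T
      intro hsub
      obtain ⟨a, haA, hay, hyc⟩ := hTmem y hy
      have hxc := hSAcard x hx
      have : x = y := eq_of_subset_of_card_le hsub (by omega)
      exact hxy this
    · -- x ∈ T, y ∈ S \ A
      intro hsub
      obtain ⟨a, haA, hax, hxc⟩ := hTmem x hx
      have haS : a ∈ S := hAS haA
      have hane : a ≠ y := by
        intro h
        have h1 := hSAcard y hy
        have h2 := hAcard a haA
        rw [h] at h2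
        omega
      exact hS (mem_coe.2 haS) (mem_coe.2 (mem_sdiff.1 hy).1) hane (hax.trans hsub)
    · -- both in T
      intro hsub
      obtain ⟨_, _, _, hxc⟩ := hTmem x hx
      obtain ⟨_, _, _, hyc⟩ := hTmem y hy
      exact hxy (eq_of_subset_of_card_le hsub (by omega))
  · rw [card_union_of_disjoint hdisj]
    have h1 : (S \ A).card + A.card = S.card := card_sdiff_add_card_eq_card hAS
    have h2 : A.card ≤ (X ∩ A').card := by
      apply card_le_card
      intro a ha
      exact mem_inter.2 ⟨hSX (hAS ha), hAA' ha⟩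
    omega

private lemma down_step {n : ℕ} (X : Finset (Finset (Fin n)))
    (hdown : ∀ i, n / 2 < i → ∀ Bf : Finset (Finset (Fin n)),
      (∀ s ∈ Bf, s.card = i) → Bf.Nonempty →
      (∀ B : Finset (Fin n), B.card = i →
        Finset.shadow {B} ⊆ Finset.shadow Bf → B ∈ Bf) →
      (X ∩ Bf).card < (X ∩ Finset.shadow Bf).card)
    (S : Finset (Finset (Fin n))) (hSX : S ⊆ X)
    (hS : IsAntichain (· ⊆ ·) (S : Set (Finset (Fin n))))
    (i : ℕ) (hi : n / 2 < i) (hmax : ∀ s ∈ S, s.card ≤ i)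
    (hex : ∃ s ∈ S, s.card = i) :
    ∃ S' : Finset (Finset (Fin n)), S' ⊆ X ∧
      IsAntichain (· ⊆ ·) (S' : Set (Finset (Fin n))) ∧ S.card < S'.card := by
  classical
  set A := S.filter (fun s => s.card = i) with hAdef
  have hAS : A ⊆ S := filter_subset _ _
  have hAcard : ∀ s ∈ A, s.card = i := fun s hs => (mem_filter.1 hs).2
  obtain ⟨A', hA'card, hAA', hshad, hclosed⟩ := down_closure i A hAcard
  obtain ⟨s₀, hs₀S, hs₀c⟩ := hex
  have hA'ne : A'.Nonempty := ⟨s₀, hAA' (mem_filter.2 ⟨hs₀S, hs₀c⟩)⟩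
  have hlt := hdown i hi A' hA'card hA'ne hclosed
  rw [hshad] at hlt
  set T := X ∩ Finset.shadow A with hTdef
  have hTX : T ⊆ X := inter_subset_left
  have hipos : 0 < i := by omega
  have hTmem : ∀ t ∈ T, ∃ a ∈ A, t ⊆ a ∧ t.card + 1 = i := by
    intro t ht
    obtain ⟨a, ha, hat, hc⟩ :=
      mem_shadow_iff_exists_mem_card_add_one.1 (mem_inter.1 ht).2
    exact ⟨a, ha, hat, by rw [← hAcard a ha, hc]⟩
  have hSAcard : ∀ s ∈ S \ A, s.card + 1 ≤ i := by
    intro s hs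
    rcases mem_sdiff.1 hs with ⟨hsS, hsA⟩
    have := hmax s hsS
    rcases Nat.lt_or_ge s.card i with h | h
    · omega
    · exact absurd (show s ∈ A from mem_filter.2 ⟨hsS, le_antisymm this h⟩) hsA
  have hdisj : Disjoint (S \ A) T := by
    rw [disjoint_left]
    intro s hs hsT
    obtain ⟨a, haA, has, hsc⟩ := hTmem s hsT
    have haS : a ∈ S := hAS haA
    have hane : s ≠ a := by
      intro h; rw [← h] at haA
      exact (mem_sdiff.1 hs).2 haA
    exact hS (mem_coe.2 (mem_sdiff.1 hs).1) (mem_coe.2 haS) hane has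
  refine ⟨(S \ A) ∪ T, ?_, ?_, ?_⟩
  · exact union_subset (fun s hs => hSX (mem_sdiff.1 hs).1) hTX
  · intro x hx y hy hxy
    simp only [coe_union, Set.mem_union, mem_coe] at hx hy
    rcases hx with hx | hx <;> rcases hy with hy | hy
    · exact hS (mem_coe.2 (mem_sdiff.1 hx).1) (mem_coe.2 (mem_sdiff.1 hy).1) hxy
    · -- x ∈ S \ A, y ∈ T
      intro hsub
      obtain ⟨a, haA, hya, hyc⟩ := hTmem y hy
      have haS : a ∈ S := hAS haA
      have hane : x ≠ a := by
        intro h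
        have h1 := hSAcard x hx
        have h2 := hAcard a haA
        rw [← h] at h2
        omega
      exact hS (mem_coe.2 (mem_sdiff.1 hx).1) (mem_coe.2 haS) hane (hsub.trans hya)
    · -- x ∈ T, y ∈ S \ A
      intro hsub
      obtain ⟨a, haA, hax, hxc⟩ := hTmem x hx
      have hyc := hSAcard y hy
      have : x = y := eq_of_subset_of_card_le hsub (by omega)
      exact hxy this
    · intro hsub
      obtain ⟨_, _, _, hxc⟩ := hTmem x hx
      obtain ⟨_, _, _, hyc⟩ := hTmem y hy
      exact hxy (eq_of_subset_of_card_le hsub (by omega))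
  · rw [card_union_of_disjoint hdisj]
    have h1 : (S \ A).card + A.card = S.card := card_sdiff_add_card_eq_card hAS
    have h2 : A.card ≤ (X ∩ A').card := by
      apply card_le_card
      intro a ha
      exact mem_inter.2 ⟨hSX (hAS ha), hAA' ha⟩
    omega

/-- Random Sperner, deterministic implication: let `n` be even and `X` a family of subsets
of `[n]` such that every nonempty closed family `A` at a level `i < n/2` satisfies
`|X ∩ ∇A| > |X ∩ A|` and every nonempty closed family at a level `i > n/2` satisfies
`|X ∩ ∂B| > |X ∩ B|`. Then the width of `X` is `|X ∩ C([n], n/2)|` and every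
maximum-size antichain of `X` is contained in the middle layer `C([n], n/2)`. -/
theorem stmt_18 (n : ℕ) (hn : Even n) (hpos : 0 < n) (X : Finset (Finset (Fin n)))
    (hup : ∀ i, i < n / 2 → ∀ A : Finset (Finset (Fin n)),
      (∀ s ∈ A, s.card = i) → A.Nonempty →
      (∀ B : Finset (Fin n), B.card = i →
        Finset.upShadow {B} ⊆ Finset.upShadow A → B ∈ A) →
      (X ∩ A).card < (X ∩ Finset.upShadow A).card)
    (hdown : ∀ i, n / 2 < i → ∀ Bf : Finset (Finset (Fin n)),
      (∀ s ∈ Bf, s.card = i) → Bf.Nonempty →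
      (∀ B : Finset (Fin n), B.card = i →
        Finset.shadow {B} ⊆ Finset.shadow Bf → B ∈ Bf) →
      (X ∩ Bf).card < (X ∩ Finset.shadow Bf).card) :
    (∀ S : Finset (Finset (Fin n)), S ⊆ X →
        IsAntichain (· ⊆ ·) (S : Set (Finset (Fin n))) →
        S.card ≤ (X.filter (fun s => s.card = n / 2)).card) ∧
      ∀ S : Finset (Finset (Fin n)), S ⊆ X →
        IsAntichain (· ⊆ ·) (S : Set (Finset (Fin n))) →
        (∀ S' : Finset (Finset (Fin n)), S' ⊆ X →
          IsAntichain (· ⊆ ·) (S' : Set (Finset (Fin n))) → S'.card ≤ S.card) →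
        ∀ s ∈ S, s.card = n / 2 := by
  classical
  -- key improvement lemma
  have key : ∀ S : Finset (Finset (Fin n)), S ⊆ X →
      IsAntichain (· ⊆ ·) (S : Set (Finset (Fin n))) →
      (∃ s ∈ S, s.card ≠ n / 2) →
      ∃ S' : Finset (Finset (Fin n)), S' ⊆ X ∧
        IsAntichain (· ⊆ ·) (S' : Set (Finset (Fin n))) ∧ S.card < S'.card := by
    intro S hSX hS hex
    obtain ⟨s, hsS, hsne⟩ := hex
    have hSne : S.Nonempty := ⟨s, hsS⟩
    obtain ⟨m, hmS, hmmin⟩ := S.exists_min_image (fun s => s.card) hSne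
    rcases Nat.lt_or_ge m.card (n / 2) with hlt | hge
    · exact up_step X hup S hSX hS m.card hlt hmmin ⟨m, hmS, rfl⟩
    · obtain ⟨M, hMS, hMmax⟩ := S.exists_max_image (fun s => s.card) hSne
      have hMgt : n / 2 < M.card := by
        have h1 := hmmin s hsS
        have h2 := hMmax s hsS
        omega
      exact down_step X hdown S hSX hS M.card hMgt hMmax ⟨M, hMS, rfl⟩
  -- second part
  have part2 : ∀ S : Finset (Finset (Fin n)), S ⊆ X →
      IsAntichain (· ⊆ ·) (S : Set (Finset (Fin n))) →
      (∀ S' : Finset (Finset (Fin n)), S' ⊆ X →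
        IsAntichain (· ⊆ ·) (S' : Set (Finset (Fin n))) → S'.card ≤ S.card) →
      ∀ s ∈ S, s.card = n / 2 := by
    intro S hSX hS hmax s hsS
    by_contra hne
    obtain ⟨S', hS'X, hS'ac, hlt⟩ := key S hSX hS ⟨s, hsS, hne⟩
    exact absurd (hmax S' hS'X hS'ac) (by omega)
  refine ⟨?_, part2⟩
  -- existence of a maximum antichain
  set 𝒜 := X.powerset.filter
    (fun S : Finset (Finset (Fin n)) =>
      IsAntichain (· ⊆ ·) (↑S : Set (Finset (Fin n)))) with h𝒜
  have h𝒜ne : 𝒜.Nonempty :=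
    ⟨∅, mem_filter.2 ⟨mem_powerset.2 (empty_subset X), by simp [IsAntichain]⟩⟩
  obtain ⟨S₀, hS₀, hS₀max⟩ := 𝒜.exists_max_image (fun S => S.card) h𝒜ne
  have hS₀X : S₀ ⊆ X := mem_powerset.1 (mem_filter.1 hS₀).1
  have hS₀ac : IsAntichain (· ⊆ ·) (S₀ : Set (Finset (Fin n))) := (mem_filter.1 hS₀).2
  have hS₀max' : ∀ S' : Finset (Finset (Fin n)), S' ⊆ X →
      IsAntichain (· ⊆ ·) (S' : Set (Finset (Fin n))) → S'.card ≤ S₀.card := by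
    intro S' hS'X hS'ac
    exact hS₀max S' (mem_filter.2 ⟨mem_powerset.2 hS'X, hS'ac⟩)
  have hS₀mid : S₀ ⊆ X.filter (fun s => s.card = n / 2) := by
    intro s hs
    exact mem_filter.2 ⟨hS₀X hs, part2 S₀ hS₀X hS₀ac hS₀max' s hs⟩
  intro S hSX hSac
  exact le_trans (hS₀max' S hSX hSac) (card_le_card hS₀mid)
end
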